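/- arXiv:2502.03503 — 6 statements merged into one kernel-verified Lean document; each statement's English description precedes it below -/
import Mathlib

section
/- Let p ≥ 1, let x₁, …, x_p ∈ ℝ be fixed context points, and let α > 0. Then the single-head softmax attention output satisfies A_α(x) − x → 0 as x → +∞. -/
open Filter Real

/-- Denominator of the softmax attention: `D_α(x) = exp(α x²) + ∑ₖ exp(α x xₖ)`. -/
noncomputable def attnDenom (p : ℕ) (xs : Fin p → ℝ) (α : ℝ) (x : ℝ) : ℝ :=
  Real.exp (α * x ^ 2) + ∑ k, Real.exp (α * x * xs k)

/-- Single-head softmax attention output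
`A_α(x) = (∑ⱼ xⱼ exp(α x xⱼ) + x exp(α x²)) / D_α(x)`. -/
noncomputable def attnOut (p : ℕ) (xs : Fin p → ℝ) (α : ℝ) (x : ℝ) : ℝ :=
  (∑ j, xs j * Real.exp (α * x * xs j) + x * Real.exp (α * x ^ 2)) / attnDenom p xs α x

lemma attnDenom_pos (p : ℕ) (xs : Fin p → ℝ) (α x : ℝ) : 0 < attnDenom p xs α x := by
  unfold attnDenom
  have : (0:ℝ) ≤ ∑ k, Real.exp (α * x * xs k) :=
    Finset.sum_nonneg fun k _ => (Real.exp_pos _).le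
  linarith [Real.exp_pos (α * x ^ 2)]

lemma attn_key (p : ℕ) (xs : Fin p → ℝ) (α x : ℝ) :
    attnOut p xs α x - x
      = ∑ j, (xs j - x) * Real.exp (α * x * xs j) / attnDenom p xs α x := by
  have hD := (attnDenom_pos p xs α x).ne'
  rw [attnOut, eq_comm, ← Finset.sum_div, div_eq_iff hD, sub_mul, div_mul_cancel₀ _ hD]
  unfold attnDenom
  simp only [sub_mul, Finset.sum_sub_distrib, mul_add, Finset.mul_sum]
  ring

lemma term_tendsto (p : ℕ) (xs : Fin p → ℝ) (α : ℝ) (hα : 0 < α) (j : Fin p) :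
    Tendsto (fun x : ℝ => (xs j - x) * Real.exp (α * x * xs j) / attnDenom p xs α x)
      atTop (nhds 0) := by
  have hg : Tendsto (fun x : ℝ => (x - xs j) * Real.exp (-(α * (x - xs j)))) atTop (nhds 0) := by
    have h1 : Tendsto (fun t : ℝ => t * Real.exp (-(α * t))) atTop (nhds 0) := by
      have h2 : Tendsto (fun t : ℝ => α * t) atTop atTop :=
        Tendsto.const_mul_atTop hα tendsto_id
      have h3 : Tendsto (fun s : ℝ => s ^ 1 * Real.exp (-s)) atTop (nhds 0) :=
        Real.tendsto_pow_mul_exp_neg_atTop_nhds_zero 1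
      have h4 := (h3.comp h2).div_const α
      simp only [Function.comp, pow_one, zero_div] at h4
      convert h4 using 2 with t
      field_simp
    have h5 : Tendsto (fun x : ℝ => x - xs j) atTop atTop :=
      tendsto_atTop_add_const_right _ _ tendsto_id
    exact h1.comp h5
  apply squeeze_zero_norm' _ hg
  filter_upwards [eventually_ge_atTop (1:ℝ), eventually_ge_atTop (xs j)] with x hx1 hxj
  have hD := attnDenom_pos p xs α x
  have hEx : Real.exp (α * x * xs j) ≤ attnDenom p xs α x := by
    unfold attnDenom
    have : Real.exp (α * x * xs j) ≤ ∑ k, Real.exp (α * x * xs k) :=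
      Finset.single_le_sum (f := fun k => Real.exp (α * x * xs k))
        (fun k _ => (Real.exp_pos _).le) (Finset.mem_univ j)
    linarith [Real.exp_pos (α * x ^ 2)]
  have hEx2 : Real.exp (α * x ^ 2) ≤ attnDenom p xs α x := by
    unfold attnDenom
    have : (0:ℝ) ≤ ∑ k, Real.exp (α * x * xs k) :=
      Finset.sum_nonneg fun k _ => (Real.exp_pos _).le
    linarith
  rw [Real.norm_eq_abs, abs_div, abs_of_pos hD, abs_mul, abs_sub_comm, abs_of_nonneg (by linarith : (0:ℝ) ≤ x - xs j), abs_of_pos (Real.exp_pos _)]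
  rw [div_le_iff₀ hD]
  have hstep : Real.exp (α * x * xs j) ≤ Real.exp (-(α * (x - xs j))) * Real.exp (α * x ^ 2) := by
    rw [← Real.exp_add, Real.exp_le_exp]
    nlinarith [mul_nonneg (mul_nonneg hα.le (sub_nonneg.2 hx1)) (sub_nonneg.2 hxj)]
  calc (x - xs j) * Real.exp (α * x * xs j)
      ≤ (x - xs j) * (Real.exp (-(α * (x - xs j))) * Real.exp (α * x ^ 2)) := by
        apply mul_le_mul_of_nonneg_left hstep (by linarith)
    _ = (x - xs j) * Real.exp (-(α * (x - xs j))) * Real.exp (α * x ^ 2) := by ring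
    _ ≤ (x - xs j) * Real.exp (-(α * (x - xs j))) * attnDenom p xs α x := by
        exact mul_le_mul_of_nonneg_left hEx2
          (mul_nonneg (by linarith) (Real.exp_pos _).le)

theorem stmt_0 (p : ℕ) (hp : 1 ≤ p) (xs : Fin p → ℝ) (α : ℝ) (hα : 0 < α) :
    Filter.Tendsto (fun x : ℝ => attnOut p xs α x - x) Filter.atTop (nhds 0) := by
  have h : Tendsto (fun x : ℝ => ∑ j, (xs j - x) * Real.exp (α * x * xs j) / attnDenom p xs α x)
      atTop (nhds 0) := by
    have := tendsto_finset_sum (Finset.univ : Finset (Fin p))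
      (fun j _ => term_tendsto p xs α hα j)
    simpa using this
  exact h.congr fun x => (attn_key p xs α x).symm
end

section
/- Let p ≥ 1, let x₁, …, x_p ∈ ℝ be fixed context points, and let α > 0. Then the single-head softmax attention output satisfies A_α(x) − x → 0 as x → −∞. -/
open Filter Real Topology

lemma attnOut_sub_self (p : ℕ) (xs : Fin p → ℝ) (α x : ℝ) :
    attnOut p xs α x - x =
      (∑ j, (xs j - x) * exp (α * x * xs j)) / attnDenom p xs α x := by
  have hD : attnDenom p xs α x ≠ 0 := by unfold attnDenom; positivity
  rw [sub_eq_iff_eq_add, attnOut, div_add' _ _ _ hD, attnDenom]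
  congr 1
  simp only [sub_mul, Finset.sum_sub_distrib, ← Finset.mul_sum]
  ring

lemma abs_attnOut_sub_self_le (p : ℕ) (xs : Fin p → ℝ) (α x : ℝ) :
    |attnOut p xs α x - x| ≤ ∑ j, |(xs j - x) * exp (α * x * (xs j - x))| := by
  have hself : exp (α * x ^ 2) ≤ attnDenom p xs α x :=
    le_add_of_nonneg_right (Finset.sum_nonneg fun _ _ => (exp_pos _).le)
  have hweight (j : Fin p) : exp (α * x * (xs j - x)) = exp (α * x * xs j) / exp (α * x ^ 2) := by
    rw [← exp_sub]; ring_nf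
  calc |attnOut p xs α x - x|
      = |∑ j, (xs j - x) * exp (α * x * xs j)| / attnDenom p xs α x := by
        rw [attnOut_sub_self, abs_div, abs_of_pos ((exp_pos _).trans_le hself)]
    _ ≤ (∑ j, |(xs j - x) * exp (α * x * xs j)|) / exp (α * x ^ 2) :=
        div_le_div₀ (Finset.sum_nonneg fun _ _ => abs_nonneg _)
          (Finset.abs_sum_le_sum_abs _ _) (exp_pos _) hself
    _ = ∑ j, |(xs j - x) * exp (α * x * (xs j - x))| := by
        simp only [Finset.sum_div, hweight, mul_div_assoc, abs_mul, abs_div, abs_exp]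

lemma tendsto_mul_exp_atBot_nhds_zero : Tendsto (fun u : ℝ => u * exp u) atBot (𝓝 0) := by
  simpa using ((tendsto_pow_mul_exp_neg_atTop_nhds_zero 1).comp tendsto_neg_atBot_atTop).neg

lemma tendsto_mul_mul_sub_atBot {α : ℝ} (hα : 0 < α) (c : ℝ) :
    Tendsto (fun x : ℝ => α * x * (c - x)) atBot atBot :=
  (tendsto_id.const_mul_atBot hα).atBot_mul_atTop₀
    (tendsto_atTop_add_const_left atBot c tendsto_neg_atBot_atTop)

lemma tendsto_sub_mul_exp_mul_sub_atBot {α : ℝ} (hα : 0 < α) (c : ℝ) :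
    Tendsto (fun x : ℝ => (c - x) * exp (α * x * (c - x))) atBot (𝓝 0) := by
  have hinv : Tendsto (fun x : ℝ => (α * x)⁻¹) atBot (𝓝 0) :=
    tendsto_inv_atBot_zero.comp (tendsto_id.const_mul_atBot hα)
  -- `(c - x) eᵘ = (α x)⁻¹ · u eᵘ` with `u = α x (c - x) → -∞`
  have h := hinv.mul (tendsto_mul_exp_atBot_nhds_zero.comp (tendsto_mul_mul_sub_atBot hα c))
  rw [zero_mul] at h
  refine h.congr' ?_
  filter_upwards [eventually_lt_atBot 0] with x hx
  simp only [Function.comp_apply]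
  field_simp [hx.ne]

theorem stmt_1_general (p : ℕ) (xs : Fin p → ℝ) (α : ℝ) (hα : 0 < α) :
    Filter.Tendsto (fun x : ℝ => attnOut p xs α x - x) Filter.atBot (nhds 0) := by
  have hbound : Tendsto (fun x : ℝ => ∑ j, |(xs j - x) * exp (α * x * (xs j - x))|)
      atBot (𝓝 0) := by
    simpa using tendsto_finsetSum Finset.univ fun j _ =>
      (tendsto_sub_mul_exp_mul_sub_atBot hα (xs j)).abs
  exact squeeze_zero_norm (abs_attnOut_sub_self_le p xs α) hbound

theorem stmt_1 (p : ℕ) (hp : 1 ≤ p) (xs : Fin p → ℝ) (α : ℝ) (hα : 0 < α) :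
    Filter.Tendsto (fun x : ℝ => attnOut p xs α x - x) Filter.atBot (nhds 0) :=
  stmt_1_general p xs α hα
end

section
/- Let p ≥ 1, let x₁, …, x_p ∈ ℝ be fixed context points, and let α < 0. Then the single-head softmax attention output satisfies A_α(x) → min_{1 ≤ j ≤ p} x_j as x → +∞. -/
open Filter Real

theorem stmt_4 (p : ℕ) (hp : 1 ≤ p) (xs : Fin p → ℝ) (α : ℝ) (hα : α < 0) :
    Filter.Tendsto (fun x : ℝ => attnOut p xs α x) Filter.atTop
      (nhds (Finset.univ.inf' ⟨⟨0, hp⟩, Finset.mem_univ _⟩ xs)) := by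
  have hα0 : α ≠ 0 := ne_of_lt hα
  set m := Finset.univ.inf' ⟨⟨0, hp⟩, Finset.mem_univ _⟩ xs with hm
  have hle : ∀ j, m ≤ xs j := fun j => Finset.inf'_le _ (Finset.mem_univ j)
  -- limit of exp(α x c) for c > 0
  have hE : ∀ c : ℝ, 0 < c → Tendsto (fun x : ℝ => Real.exp (α * x * c)) atTop (nhds 0) := by
    intro c hc
    rw [Real.tendsto_exp_comp_nhds_zero]
    have h1 : Tendsto (fun x : ℝ => (α * c) * x) atTop atBot :=
      Tendsto.const_mul_atTop_of_neg (by nlinarith : α * c < 0) tendsto_id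
    exact h1.congr (fun x => by ring)
  -- x * exp (α x) → 0
  have hkey : Tendsto (fun x : ℝ => x * Real.exp (α * x)) atTop (nhds 0) := by
    have h1 : Tendsto (fun y : ℝ => y ^ 1 * Real.exp (-y)) atTop (nhds 0) :=
      Real.tendsto_pow_mul_exp_neg_atTop_nhds_zero 1
    have h2 : Tendsto (fun x : ℝ => (-α) * x) atTop atTop :=
      Tendsto.const_mul_atTop (by linarith) tendsto_id
    have h3 := (h1.comp h2).const_mul (-1/α)
    rw [mul_zero] at h3
    refine h3.congr (fun x => ?_)
    simp only [Function.comp]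
    rw [pow_one]
    have h4 : -(-α * x) = α * x := by ring
    rw [h4]
    field_simp
  -- each context exp term
  have hterm : ∀ j, Tendsto (fun x : ℝ => Real.exp (α * x * (xs j - m))) atTop
      (nhds (if xs j = m then 1 else 0)) := by
    intro j
    by_cases h : xs j = m
    · simp [h]
    · have hc : 0 < xs j - m := sub_pos.mpr (lt_of_le_of_ne (hle j) (fun e => h e.symm))
      simp only [if_neg h]
      exact hE _ hc
  -- eventual comparison
  have hev : ∀ᶠ x : ℝ in atTop, α * x * (x - m) ≤ α * x := by
    filter_upwards [eventually_ge_atTop (max (m + 1) 0)] with x hx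
    have h1 : m + 1 ≤ x := le_trans (le_max_left _ _) hx
    have h0 : (0:ℝ) ≤ x := le_trans (le_max_right _ _) hx
    have hax : α * x ≤ 0 := mul_nonpos_of_nonpos_of_nonneg (le_of_lt hα) h0
    have h2 := mul_le_mul_of_nonpos_left (show (1:ℝ) ≤ x - m by linarith) hax
    linarith [h2]
  have hq : Tendsto (fun x : ℝ => Real.exp (α * x * (x - m))) atTop (nhds 0) := by
    apply squeeze_zero' (by filter_upwards with x using (Real.exp_pos _).le)
      (by filter_upwards [hev] with x hx using Real.exp_le_exp.mpr hx)
    have := hE 1 one_pos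
    exact this.congr (fun x => by rw [mul_one])
  have hxq : Tendsto (fun x : ℝ => x * Real.exp (α * x * (x - m))) atTop (nhds 0) := by
    apply squeeze_zero'
      (by filter_upwards [eventually_ge_atTop (0:ℝ)] with x hx using
        mul_nonneg hx (Real.exp_pos _).le)
      (by filter_upwards [hev, eventually_ge_atTop (0:ℝ)] with x hx hx0 using
        mul_le_mul_of_nonneg_left (Real.exp_le_exp.mpr hx) hx0)
    exact hkey
  -- the limiting denominator value
  set N : ℝ := ∑ j, (if xs j = m then (1:ℝ) else 0) with hN
  obtain ⟨j0, -, hj0⟩ := Finset.exists_mem_eq_inf' (⟨⟨0, hp⟩, Finset.mem_univ _⟩ :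
    (Finset.univ : Finset (Fin p)).Nonempty) xs
  have hNpos : 0 < N := by
    apply Finset.sum_pos' (fun j _ => by split <;> norm_num)
    exact ⟨j0, Finset.mem_univ _, by rw [if_pos (hm.trans hj0).symm]; norm_num⟩
  have hnumsum : (∑ j, xs j * (if xs j = m then (1:ℝ) else 0)) = m * N := by
    rw [hN, Finset.mul_sum]
    exact Finset.sum_congr rfl (fun j _ => by split <;> simp_all)
  -- limits of transformed numerator and denominator
  have hDen : Tendsto (fun x : ℝ => Real.exp (α * x * (x - m)) +
      ∑ j, Real.exp (α * x * (xs j - m))) atTop (nhds N) := by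
    have h := hq.add (tendsto_finset_sum Finset.univ (fun j _ => hterm j))
    rw [zero_add, ← hN] at h
    exact h
  have hNum : Tendsto (fun x : ℝ => (∑ j, xs j * Real.exp (α * x * (xs j - m))) +
      x * Real.exp (α * x * (x - m))) atTop (nhds (m * N)) := by
    have hs : Tendsto (fun x : ℝ => ∑ j, xs j * Real.exp (α * x * (xs j - m))) atTop
        (nhds (∑ j, xs j * (if xs j = m then (1:ℝ) else 0))) :=
      tendsto_finset_sum Finset.univ (fun j _ => (hterm j).const_mul (xs j))
    rw [hnumsum] at hs
    have h := hs.add hxq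
    rw [add_zero] at h
    exact h
  have hdiv := hNum.div hDen (ne_of_gt hNpos)
  rw [mul_div_assoc, div_self (ne_of_gt hNpos), mul_one] at hdiv
  refine hdiv.congr (fun x => ?_)
  have hne : Real.exp (-(α * x * m)) ≠ 0 := Real.exp_ne_zero _
  have e1 : ∀ c : ℝ, Real.exp (α * x * (c - m)) =
      Real.exp (α * x * c) * Real.exp (-(α * x * m)) := by
    intro c; rw [← Real.exp_add]; congr 1; ring
  have e2 : Real.exp (α * x * (x - m)) =
      Real.exp (α * x ^ 2) * Real.exp (-(α * x * m)) := by
    rw [← Real.exp_add]; congr 1; ring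
  simp only [Pi.div_apply, e1, e2, ← mul_assoc]
  rw [← Finset.sum_mul, ← Finset.sum_mul, ← add_mul, ← add_mul,
    mul_div_mul_right _ _ hne]
  simp only [attnOut, attnDenom, pow_two, mul_assoc]
end

section
/- (Asymptotic insensitivity of attention to prompt content.) Fix H ≥ 1 heads with parameters α₁, …, α_H ∈ ℝ and value vectors ζ₁, …, ζ_H ∈ ℝ^d, and fix p ≥ 1. Let (x₁, …, x_p) and (y₁, …, y_p) be two contexts of the same length p, with corresponding multi-head attention outputs Attn_x and Attn_y. Then the difference Attn_x(t) − Attn_y(t) converges to a constant vector of ℝ^d as t → +∞; in particular the asymptotic slope of the multi-head attention output does not depend on the context points. -/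
open Filter Real
open scoped Classical

/-- Multi-head attention output `Attn(x) = ∑ₕ A_{αₕ}(x) • ζₕ` with values in ℝ^d. -/
noncomputable def multiAttn (p : ℕ) (xs : Fin p → ℝ) (H d : ℕ) (αs : Fin H → ℝ)
    (ζ : Fin H → EuclideanSpace ℝ (Fin d)) (x : ℝ) : EuclideanSpace ℝ (Fin d) :=
  ∑ h, attnOut p xs (αs h) x • ζ h

/-!
Each head is a softmax average of the tokens `x₁, …, x_p, t` with logits `α t xⱼ` and `α t²`.
Subtracting a token value `c` and renormalising all weights by `exp (-α t c)` leaves a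
denominator `≥ 1` and numerator terms `(v - c) exp (α t (v - c))`, which all vanish as `t → ∞`
when `c` is the dominant token: the query `t` itself if `α > 0`, the smallest context point if
`α < 0`. So `A_α(t) - t → 0` for `α > 0` and `A_α(t) → min xⱼ` for `α < 0`, while for `α = 0`
the head is the plain mean `(t + ∑ xⱼ) / (p + 1)`. In every case the outputs for two contexts
differ by a convergent function, and `Attn` is a fixed linear combination of heads.
-/

open Topology

lemma tendsto_sub_mul_exp_mul_mul_sub {β : ℝ} (hβ : β < 0) (a : ℝ) :
    Tendsto (fun t => (t - a) * exp (β * t * (t - a))) atTop (𝓝 0) := by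
  have hlin : Tendsto (fun t => (t - a) * exp (β * (t - a))) atTop (𝓝 0) := by
    have := (tendsto_rpow_mul_exp_neg_mul_atTop_nhds_zero 1 (-β) (by linarith)).comp
      (tendsto_atTop_add_const_right _ (-a) tendsto_id)
    simpa [Function.comp_def, ← sub_eq_add_neg] using this
  refine squeeze_zero' ?_ ?_ hlin
  · filter_upwards [eventually_ge_atTop a] with t ht
    exact mul_nonneg (sub_nonneg.2 ht) (exp_pos _).le
  · filter_upwards [eventually_ge_atTop a, eventually_ge_atTop 1] with t hta ht1
    refine mul_le_mul_of_nonneg_left (exp_le_exp.2 ?_) (sub_nonneg.2 hta)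
    nlinarith [mul_nonneg (sub_nonneg.2 hta) (sub_nonneg.2 ht1)]

section attnOut

variable {p : ℕ} {xs : Fin p → ℝ} {α : ℝ}

lemma attnOut_sub_eq (t c : ℝ) :
    attnOut p xs α t - c =
      (∑ j, (xs j - c) * exp (α * t * (xs j - c)) + (t - c) * exp (α * t * (t - c))) /
        (exp (α * t * (t - c)) + ∑ k, exp (α * t * (xs k - c))) := by
  have hD : attnDenom p xs α t ≠ 0 := by
    unfold attnDenom; positivity
  have hshift : ∀ y, exp (α * t * (y - c)) = exp (α * t * y) * exp (-(α * t * c)) := by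
    intro y; rw [← exp_add]; ring_nf
  simp only [hshift, ← Finset.sum_mul, ← mul_assoc, ← add_mul]
  rw [mul_div_mul_right _ _ (exp_ne_zero _), attnOut, div_sub' hD]
  unfold attnDenom
  simp only [sub_mul, Finset.sum_sub_distrib, ← Finset.mul_sum, sq, ← mul_assoc]
  ring

lemma tendsto_attnOut_sub {c : ℝ → ℝ}
    (hden : ∀ᶠ t in atTop, 1 ≤ exp (α * t * (t - c t)) + ∑ k, exp (α * t * (xs k - c t)))
    (hquery : Tendsto (fun t => (t - c t) * exp (α * t * (t - c t))) atTop (𝓝 0))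
    (hctx : ∀ j, Tendsto (fun t => (xs j - c t) * exp (α * t * (xs j - c t))) atTop (𝓝 0)) :
    Tendsto (fun t => attnOut p xs α t - c t) atTop (𝓝 0) := by
  have hnum := (tendsto_finsetSum Finset.univ fun j _ => hctx j).add hquery
  rw [Finset.sum_const_zero, zero_add] at hnum
  refine squeeze_zero_norm' ?_ (by simpa using hnum.norm)
  filter_upwards [hden] with t ht
  rw [attnOut_sub_eq, norm_div, Real.norm_of_nonneg (zero_le_one.trans ht)]
  exact div_le_self (norm_nonneg _) ht

lemma tendsto_attnOut_sub_self (hα : 0 < α) :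
    Tendsto (fun t => attnOut p xs α t - t) atTop (𝓝 0) := by
  refine tendsto_attnOut_sub (c := fun t => t) (.of_forall fun t => ?_) ?_ fun j => ?_
  · simp only [sub_self, mul_zero, exp_zero]
    exact le_add_of_nonneg_right (Finset.sum_nonneg fun k _ => (exp_pos _).le)
  · simpa only [sub_self, zero_mul] using tendsto_const_nhds
  · have := (tendsto_sub_mul_exp_mul_mul_sub (neg_neg_of_pos hα) (xs j)).neg
    rw [neg_zero] at this
    refine this.congr fun t => ?_
    ring_nf

lemma tendsto_attnOut_of_neg (hα : α < 0) {i : Fin p} (hi : ∀ j, xs i ≤ xs j) :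
    Tendsto (attnOut p xs α) atTop (𝓝 (xs i)) := by
  refine tendsto_sub_nhds_zero_iff.1 <| tendsto_attnOut_sub (c := fun _ => xs i)
    (.of_forall fun t => ?_) (tendsto_sub_mul_exp_mul_mul_sub hα (xs i)) fun j => ?_
  · calc (1 : ℝ) = exp (α * t * (xs i - xs i)) := by simp
      _ ≤ ∑ k, exp (α * t * (xs k - xs i)) :=
        Finset.single_le_sum (f := fun k => exp (α * t * (xs k - xs i)))
          (fun k _ => (exp_pos _).le) (Finset.mem_univ i)
      _ ≤ _ := le_add_of_nonneg_left (exp_pos _).le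
  rcases (hi j).eq_or_lt with hij | hij
  · simpa only [hij, sub_self, zero_mul] using tendsto_const_nhds
  · have hdecay : Tendsto (fun t => α * (xs j - xs i) * t) atTop atBot :=
      tendsto_id.const_mul_atTop_of_neg (mul_neg_of_neg_of_pos hα (sub_pos.2 hij))
    have := (tendsto_exp_atBot.comp hdecay).const_mul (xs j - xs i)
    rw [mul_zero] at this
    refine this.congr fun t => ?_
    simp only [Function.comp_apply]
    ring_nf

lemma attnOut_zero (t : ℝ) : attnOut p xs 0 t = (∑ j, xs j + t) / (p + 1) := by
  simp [attnOut, attnDenom, add_comm]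

end attnOut

lemma exists_tendsto_attnOut_sub_attnOut {p : ℕ} (hp : 1 ≤ p) (xs ys : Fin p → ℝ) (α : ℝ) :
    ∃ L, Tendsto (fun t => attnOut p xs α t - attnOut p ys α t) atTop (𝓝 L) := by
  rcases lt_trichotomy α 0 with hα | rfl | hα
  · have : Nonempty (Fin p) := ⟨⟨0, hp⟩⟩
    obtain ⟨i, -, hi⟩ := Finset.exists_min_image Finset.univ xs Finset.univ_nonempty
    obtain ⟨k, -, hk⟩ := Finset.exists_min_image Finset.univ ys Finset.univ_nonempty
    exact ⟨_, (tendsto_attnOut_of_neg hα fun j => hi j (Finset.mem_univ j)).sub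
      (tendsto_attnOut_of_neg hα fun j => hk j (Finset.mem_univ j))⟩
  · refine ⟨(∑ j, xs j - ∑ j, ys j) / (p + 1), tendsto_const_nhds.congr fun t => ?_⟩
    rw [attnOut_zero, attnOut_zero]
    ring
  · have := (tendsto_attnOut_sub_self (xs := xs) hα).sub (tendsto_attnOut_sub_self (xs := ys) hα)
    rw [sub_zero] at this
    exact ⟨0, this.congr fun t => by ring⟩

theorem stmt_8_general (p : ℕ) (hp : 1 ≤ p) (H d : ℕ)
    (αs : Fin H → ℝ) (ζ : Fin H → EuclideanSpace ℝ (Fin d))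
    (xs ys : Fin p → ℝ) :
    ∃ c : EuclideanSpace ℝ (Fin d),
      Filter.Tendsto (fun t : ℝ => multiAttn p xs H d αs ζ t - multiAttn p ys H d αs ζ t)
        Filter.atTop (nhds c) := by
  choose L hL using fun h => exists_tendsto_attnOut_sub_attnOut hp xs ys (αs h)
  refine ⟨∑ h, L h • ζ h, (tendsto_finsetSum Finset.univ fun h _ =>
    (hL h).smul_const (ζ h)).congr fun t => ?_⟩
  simp only [multiAttn, ← Finset.sum_sub_distrib, sub_smul]

theorem stmt_8 (p : ℕ) (hp : 1 ≤ p) (H d : ℕ) (hH : 1 ≤ H) (hd : 1 ≤ d)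
    (αs : Fin H → ℝ) (ζ : Fin H → EuclideanSpace ℝ (Fin d))
    (xs ys : Fin p → ℝ) :
    ∃ c : EuclideanSpace ℝ (Fin d),
      Filter.Tendsto (fun t : ℝ => multiAttn p xs H d αs ζ t - multiAttn p ys H d αs ζ t)
        Filter.atTop (nhds c) :=
  stmt_8_general p hp H d αs ζ xs ys
end

section
/- (Proposition: Layer Normalization is responsible for boundary values.) Let d ≥ 1, let u, w ∈ ℝ^d with Var(u) > 0, and let v : ℝ → ℝ^d satisfy v(x) − (x·u + w) → 0 as x → +∞. Then for any gain ρ ∈ ℝ^d and bias ε ∈ ℝ^d, the Layer Normalization output converges to a constant vector: LN(v(x)) → ((u − mean(u)·𝟙)/√(Var(u))) ⊙ ρ + ε as x → +∞. -/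
open Filter Real

/-- Coordinate mean `mean(v) = (1/d) ∑ᵢ vᵢ` of a vector in ℝ^d. -/
noncomputable def vecMean {d : ℕ} (v : EuclideanSpace ℝ (Fin d)) : ℝ :=
  (∑ i, v i) / d

/-- Coordinate variance `Var(v) = (1/d) ∑ᵢ (vᵢ − mean(v))²` of a vector in ℝ^d. -/
noncomputable def vecVar {d : ℕ} (v : EuclideanSpace ℝ (Fin d)) : ℝ :=
  (∑ i, (v i - vecMean v) ^ 2) / d

/-- Layer Normalization with gain `ρ` and bias `ε`:
`LN(v) = ((v − mean(v)·𝟙)/√Var(v)) ⊙ ρ + ε` (entrywise). -/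
noncomputable def layerNorm {d : ℕ} (ρ ε : EuclideanSpace ℝ (Fin d))
    (v : EuclideanSpace ℝ (Fin d)) : EuclideanSpace ℝ (Fin d) :=
  WithLp.toLp 2 (fun i => (v i - vecMean v) / Real.sqrt (vecVar v) * ρ i + ε i)

/-! Layer Normalization is invariant under positive rescaling, so `LN(v x) = LN(x⁻¹ • v x)` for
`x > 0`. Since `x⁻¹ • v x → u` and `LN` is continuous wherever the variance is positive,
`LN(v x) → LN(u)`. -/

section LayerNorm

variable {d : ℕ}

lemma vecMean_smul (c : ℝ) (v : EuclideanSpace ℝ (Fin d)) : vecMean (c • v) = c * vecMean v := by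
  simp only [vecMean, PiLp.smul_apply, smul_eq_mul, ← Finset.mul_sum, mul_div_assoc]

lemma vecVar_smul (c : ℝ) (v : EuclideanSpace ℝ (Fin d)) :
    vecVar (c • v) = c ^ 2 * vecVar v := by
  simp only [vecVar, vecMean_smul, PiLp.smul_apply, smul_eq_mul, ← mul_sub, mul_pow,
    ← Finset.mul_sum, mul_div_assoc]

lemma layerNorm_smul (ρ ε : EuclideanSpace ℝ (Fin d)) {c : ℝ} (hc : 0 < c)
    (v : EuclideanSpace ℝ (Fin d)) : layerNorm ρ ε (c • v) = layerNorm ρ ε v := by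
  have hsqrt : √(vecVar (c • v)) = c * √(vecVar v) := by
    rw [vecVar_smul, Real.sqrt_mul (sq_nonneg c), Real.sqrt_sq hc.le]
  ext i
  simp only [layerNorm, hsqrt, vecMean_smul, PiLp.smul_apply, smul_eq_mul, ← mul_sub,
    mul_div_mul_left _ _ hc.ne']

@[fun_prop]
lemma continuous_vecMean : Continuous (vecMean : EuclideanSpace ℝ (Fin d) → ℝ) := by
  unfold vecMean; fun_prop

@[fun_prop]
lemma continuous_vecVar : Continuous (vecVar : EuclideanSpace ℝ (Fin d) → ℝ) := by
  unfold vecVar; fun_prop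

lemma continuousAt_layerNorm (ρ ε : EuclideanSpace ℝ (Fin d)) {v : EuclideanSpace ℝ (Fin d)}
    (hv : 0 < vecVar v) : ContinuousAt (layerNorm ρ ε) v := by
  unfold layerNorm
  fun_prop (disch := exact (Real.sqrt_pos.2 hv).ne')

end LayerNorm

lemma tendsto_inv_smul_of_tendsto_sub_smul_add {E : Type*} [NormedAddCommGroup E]
    [NormedSpace ℝ E] {f : ℝ → E} {u w : E}
    (hf : Tendsto (fun x : ℝ => f x - (x • u + w)) atTop (nhds 0)) :
    Tendsto (fun x : ℝ => x⁻¹ • f x) atTop (nhds u) := by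
  have h : Tendsto (fun x : ℝ => x⁻¹ • (f x - (x • u + w) + w) + u) atTop (nhds u) := by
    simpa using (tendsto_inv_atTop_zero.smul (hf.add_const w)).add_const u
  refine h.congr' ?_
  filter_upwards [eventually_ne_atTop 0] with x hx
  rw [sub_add_eq_sub_sub, sub_add_cancel, smul_sub, inv_smul_smul₀ hx, sub_add_cancel]

theorem stmt_10_general (d : ℕ) (u w : EuclideanSpace ℝ (Fin d))
    (hu : 0 < vecVar u)
    (v : ℝ → EuclideanSpace ℝ (Fin d))
    (hv : Filter.Tendsto (fun x : ℝ => v x - (x • u + w)) Filter.atTop (nhds 0))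
    (ρ ε : EuclideanSpace ℝ (Fin d)) :
    Filter.Tendsto (fun x : ℝ => layerNorm ρ ε (v x)) Filter.atTop
      (nhds (WithLp.toLp 2 (fun i => (u i - vecMean u) / Real.sqrt (vecVar u) * ρ i + ε i))) := by
  have hrescaled := (continuousAt_layerNorm ρ ε hu).tendsto.comp
    (tendsto_inv_smul_of_tendsto_sub_smul_add hv)
  refine hrescaled.congr' ?_
  filter_upwards [eventually_gt_atTop 0] with x hx
  exact layerNorm_smul ρ ε (inv_pos.2 hx) (v x)

theorem stmt_10 (d : ℕ) (hd : 1 ≤ d) (u w : EuclideanSpace ℝ (Fin d))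
    (hu : 0 < vecVar u)
    (v : ℝ → EuclideanSpace ℝ (Fin d))
    (hv : Filter.Tendsto (fun x : ℝ => v x - (x • u + w)) Filter.atTop (nhds 0))
    (ρ ε : EuclideanSpace ℝ (Fin d)) :
    Filter.Tendsto (fun x : ℝ => layerNorm ρ ε (v x)) Filter.atTop
      (nhds (WithLp.toLp 2 (fun i => (u i - vecMean u) / Real.sqrt (vecVar u) * ρ i + ε i))) :=
  stmt_10_general d u w hu v hv ρ ε
end

section
/- (Lemma: a one-layer attention-only transformer cannot ICL the class of linear functions.) Let d ≥ 1, let C ∈ ℝ^d with C ≠ 0, and let ε be any real with 0 < ε < ‖C‖². Then for every p ≥ 1 and every δ > 0 there exist a coefficient a > 0 and context points x₁, …, x_p with 0 < x_j < δ for all j such that ‖(a+1)·(∑_{j=1}^p x_j)·C‖² ≥ ε·(1 + (a+1)·∑_{j=1}^p x_j)²; that is, the accuracy condition required for the one-layer model with parameter vector C to ε-approximate the target f(x) = a·x at query x = 0 fails. -/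
open Filter Topology

/-- Divided by `t ^ 2`, the inequality reads `ε * (1 + t⁻¹) ^ 2 < c`, and the left side tends to
`ε` as `t → ∞`. -/
theorem eventually_mul_one_add_sq_lt_mul_sq {ε c : ℝ} (h : ε < c) :
    ∀ᶠ t in atTop, ε * (1 + t) ^ 2 < c * t ^ 2 := by
  have hlim : Tendsto (fun t : ℝ => ε * (1 + t⁻¹) ^ 2) atTop (𝓝 (ε * (1 + 0) ^ 2)) :=
    ((tendsto_const_nhds.add tendsto_inv_atTop_zero).pow 2).const_mul ε
  rw [add_zero, one_pow, mul_one] at hlim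
  filter_upwards [hlim.eventually (gt_mem_nhds h), eventually_gt_atTop 0] with t hlt ht
  have hsq : (1 + t) ^ 2 = (1 + t⁻¹) ^ 2 * t ^ 2 := by field_simp; ring
  rw [hsq, ← mul_assoc]
  exact mul_lt_mul_of_pos_right hlt (by positivity)

theorem stmt_14_general (d : ℕ) (C : EuclideanSpace ℝ (Fin d))
    (ε : ℝ) (hεC : ε < ‖C‖ ^ 2) :
    ∀ p : ℕ, 1 ≤ p → ∀ δ : ℝ, 0 < δ →
      ∃ a : ℝ, 0 < a ∧ ∃ xs : Fin p → ℝ, (∀ j, 0 < xs j ∧ xs j < δ) ∧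
        ε * (1 + (a + 1) * ∑ j, xs j) ^ 2 ≤ ‖((a + 1) * ∑ j, xs j) • C‖ ^ 2 := by
  intro p hp δ hδ
  have hS : 0 < ∑ _j : Fin p, δ / 2 :=
    Finset.sum_pos (fun _ _ => half_pos hδ) (Finset.univ_nonempty_iff.mpr ⟨⟨0, hp⟩⟩)
  have hscale : Tendsto (fun a : ℝ => (a + 1) * ∑ _j : Fin p, δ / 2) atTop atTop :=
    (tendsto_atTop_add_const_right _ 1 tendsto_id).atTop_mul_const hS
  obtain ⟨a, ha, hlt⟩ :=
    ((eventually_gt_atTop 0).and (hscale.eventually (eventually_mul_one_add_sq_lt_mul_sq hεC))).exists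
  refine ⟨a, ha, fun _ => δ / 2, fun _ => ⟨half_pos hδ, half_lt_self hδ⟩, ?_⟩
  rw [norm_smul, mul_pow, Real.norm_eq_abs, sq_abs, mul_comm _ (‖C‖ ^ 2)]
  exact hlt.le

theorem stmt_14 (d : ℕ) (hd : 1 ≤ d) (C : EuclideanSpace ℝ (Fin d)) (hC : C ≠ 0)
    (ε : ℝ) (hε : 0 < ε) (hεC : ε < ‖C‖ ^ 2) :
    ∀ p : ℕ, 1 ≤ p → ∀ δ : ℝ, 0 < δ →
      ∃ a : ℝ, 0 < a ∧ ∃ xs : Fin p → ℝ, (∀ j, 0 < xs j ∧ xs j < δ) ∧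
        ε * (1 + (a + 1) * ∑ j, xs j) ^ 2 ≤ ‖((a + 1) * ∑ j, xs j) • C‖ ^ 2 :=
  stmt_14_general d C ε hεC
end
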